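/- Suppose the α-evolutoid is singular at s₀, i.e. ρ_α'(s₀) = −cos α. Then γ_α''(s₀) = ρ_α''(s₀)·w(s₀), where w(s) = −c·sin_c(ρ_α(s))·γ(s) + cos_c(ρ_α(s))·v_α(s). In particular, if moreover ρ_α''(s₀) = 0, then γ_α''(s₀) = 0 and hence γ_α''(s₀) ∧_c γ_α'''(s₀) = 0, so the second and third derivatives of γ_α at s₀ are linearly dependent and the singularity is not of type (2,3,0) (not an ordinary cusp). -/

import Mathlib

noncomputable section

open Real

/-- The bilinear form `⟨x,y⟩_c = c·x₁y₁ + x₂y₂ + x₃y₃` on `ℝ³`. -/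
def ip (c : ℝ) (x y : ℝ × ℝ × ℝ) : ℝ :=
  c * x.1 * y.1 + x.2.1 * y.2.1 + x.2.2 * y.2.2

/-- The product `x ∧_c y = (c(x₂y₃ − x₃y₂), x₃y₁ − x₁y₃, x₁y₂ − x₂y₁)`. -/
def wedge (c : ℝ) (x y : ℝ × ℝ × ℝ) : ℝ × ℝ × ℝ :=
  (c * (x.2.1 * y.2.2 - x.2.2 * y.2.1),
   x.2.2 * y.1 - x.1 * y.2.2,
   x.1 * y.2.1 - x.2.1 * y.1)

/-- `sin_c`: `sinh` when `c = -1`, `sin` when `c = 1`. -/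
def sinc (c x : ℝ) : ℝ := if c = -1 then Real.sinh x else Real.sin x

/-- `cos_c`: `cosh` when `c = -1`, `cos` when `c = 1`. -/
def cosc (c x : ℝ) : ℝ := if c = -1 then Real.cosh x else Real.cos x

/-- `tan_c = sin_c / cos_c`. -/
def tanc (c x : ℝ) : ℝ := sinc c x / cosc c x

/-- Inverse hyperbolic tangent. -/
def arctanh (x : ℝ) : ℝ := Real.log ((1 + x) / (1 - x)) / 2

/-- `arctan_c`: `arctanh` when `c = -1`, `arctan` when `c = 1`. -/
def arctanc (c x : ℝ) : ℝ := if c = -1 then arctanh x else Real.arctan x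

section Helpers

lemma ip_symm (c : ℝ) (x y : ℝ × ℝ × ℝ) : ip c x y = ip c y x := by
  simp only [ip]; ring

lemma expand_lemma (c : ℝ) (x y u : ℝ × ℝ × ℝ) (hD : c * c = 1)
    (hA : ip c x x = c) (hB : ip c y y = 1) (hC : ip c x y = 0) :
    (c * ip c u x) • x + (ip c u y) • y + (ip c u (wedge c x y)) • (wedge c x y) = u := by
  obtain ⟨x1, x2, x3⟩ := x
  obtain ⟨y1, y2, y3⟩ := y
  obtain ⟨u1, u2, u3⟩ := u
  simp only [ip, wedge, Prod.smul_mk, Prod.mk_add_mk, Prod.mk.injEq, smul_eq_mul] at *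
  refine ⟨?_, ?_, ?_⟩
  · linear_combination (c*u1 + (-1)*c*c*y1*y1*u1 + (-1)*c*y1*y2*u2 + (-1)*c*y1*y3*u3)*hA + (u1 + c*x3*x3*u1 + c*x2*x2*u1 + (-1)*c*c*u1 + (-1)*c*x1*x2*u2 + (-1)*c*x1*x3*u3)*hB + ((-1)*c*x3*y3*u1 + (-1)*c*x2*y2*u1 + c*c*x1*y1*u1 + c*x2*y1*u2 + c*x1*y2*u2 + c*x3*y1*u3 + c*x1*y3*u3)*hC + (y3*y3*u1 + y2*y2*u1 + c*x3*x3*y2*y2*u1 + (-2)*c*x2*x3*y2*y3*u1 + c*x2*x2*y3*y3*u1 + (-1)*y1*y2*u2 + (-1)*y1*y3*u3)*hD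
  · linear_combination ((-1)*y1*y2*u1 + y1*y1*u2 + c*y3*y3*u2 + (-1)*c*y2*y3*u3)*hA + ((-1)*c*c*x1*x2*u1 + u2 + (-1)*c*x2*x2*u2 + (-1)*c*x2*x3*u3)*hB + (x1*y2*u1 + c*c*x2*y1*u1 + (-1)*x1*y1*u2 + (-1)*c*x3*y3*u2 + c*x2*y2*u2 + c*x3*y2*u3 + c*x2*y3*u3)*hC + ((-1)*x3*x3*y1*y2*u1 + (-1)*x2*x2*y1*y2*u1 + x1*x3*y2*y3*u1 + x1*x2*y2*y2*u1 + y3*y3*u2 + x2*x2*y1*y1*u2 + x1*x3*y1*y3*u2 + (-1)*x1*x2*y1*y2*u2 + (-1)*x1*x1*y3*y3*u2 + (-1)*y2*y3*u3 + x2*x3*y1*y1*u3 + (-1)*x1*x3*y1*y2*u3 + (-1)*x1*x2*y1*y3*u3 + x1*x1*y2*y3*u3)*hD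
  · linear_combination ((-1)*y1*y3*u1 + (-1)*c*y2*y3*u2 + y1*y1*u3 + c*y2*y2*u3)*hA + ((-1)*c*c*x1*x3*u1 + (-1)*c*x2*x3*u2 + u3 + (-1)*c*x3*x3*u3)*hB + (x1*y3*u1 + c*c*x3*y1*u1 + c*x3*y2*u2 + c*x2*y3*u2 + (-1)*x1*y1*u3 + c*x3*y3*u3 + (-1)*c*x2*y2*u3)*hC + ((-1)*x3*x3*y1*y3*u1 + (-1)*x2*x2*y1*y3*u1 + x1*x3*y3*y3*u1 + x1*x2*y2*y3*u1 + (-1)*y2*y3*u2 + x2*x3*y1*y1*u2 + (-1)*x1*x3*y1*y2*u2 + (-1)*x1*x2*y1*y3*u2 + x1*x1*y2*y3*u2 + y2*y2*u3 + x3*x3*y1*y1*u3 + (-1)*x1*x3*y1*y3*u3 + x1*x2*y1*y2*u3 + (-1)*x1*x1*y2*y2*u3)*hD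

lemma wedge_triple (c : ℝ) (x y : ℝ × ℝ × ℝ) (hD : c * c = 1)
    (hA : ip c x x = c) (hC : ip c x y = 0) :
    wedge c x (wedge c x y) = -y := by
  obtain ⟨x1, x2, x3⟩ := x
  obtain ⟨y1, y2, y3⟩ := y
  simp only [ip, wedge, Prod.neg_mk, Prod.mk.injEq] at *
  refine ⟨?_, ?_, ?_⟩
  · linear_combination ((-1)*c*y1)*hA + (c*x1)*hC + ((-1)*y1)*hD
  · linear_combination ((-1)*c*y2)*hA + (c*x2)*hC + ((-1)*y2 + (-1)*x1*x2*y1 + x1*x1*y2)*hD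
  · linear_combination ((-1)*c*y3)*hA + (c*x3)*hC + ((-1)*y3 + (-1)*x1*x3*y1 + x1*x1*y3)*hD

lemma wedge_self (c : ℝ) (x : ℝ × ℝ × ℝ) : wedge c x x = 0 := by
  simp only [wedge]; ring_nf; rfl

lemma wedge_bilin (c r s : ℝ) (x u v : ℝ × ℝ × ℝ) :
    wedge c x (r • u + s • v) = r • wedge c x u + s • wedge c x v := by
  obtain ⟨x1, x2, x3⟩ := x; obtain ⟨u1, u2, u3⟩ := u; obtain ⟨v1, v2, v3⟩ := v
  simp only [wedge, Prod.smul_mk, Prod.mk_add_mk, Prod.mk.injEq, smul_eq_mul]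
  refine ⟨by ring, by ring, by ring⟩

lemma wedge_zero_left (c : ℝ) (x : ℝ × ℝ × ℝ) : wedge c 0 x = 0 := by
  obtain ⟨x1, x2, x3⟩ := x
  simp [wedge, Prod.ext_iff]

lemma hasDerivAt_comp1 {f : ℝ → ℝ × ℝ × ℝ} {f' : ℝ × ℝ × ℝ} {s : ℝ}
    (hf : HasDerivAt f f' s) : HasDerivAt (fun s => (f s).1) f'.1 s := by
  have h := hf.hasFDerivAt.fst.hasDerivAt
  simpa using h

lemma hasDerivAt_comp21 {f : ℝ → ℝ × ℝ × ℝ} {f' : ℝ × ℝ × ℝ} {s : ℝ}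
    (hf : HasDerivAt f f' s) : HasDerivAt (fun s => (f s).2.1) f'.2.1 s := by
  have h := hf.hasFDerivAt.snd.fst.hasDerivAt
  simpa using h

lemma hasDerivAt_comp22 {f : ℝ → ℝ × ℝ × ℝ} {f' : ℝ × ℝ × ℝ} {s : ℝ}
    (hf : HasDerivAt f f' s) : HasDerivAt (fun s => (f s).2.2) f'.2.2 s := by
  have h := hf.hasFDerivAt.snd.snd.hasDerivAt
  simpa using h

lemma hasDerivAt_ip {c : ℝ} {f g : ℝ → ℝ × ℝ × ℝ} {f' g' : ℝ × ℝ × ℝ} {s : ℝ}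
    (hf : HasDerivAt f f' s) (hg : HasDerivAt g g' s) :
    HasDerivAt (fun s => ip c (f s) (g s)) (ip c f' (g s) + ip c (f s) g') s := by
  have h1 := hasDerivAt_comp1 hf; have h2 := hasDerivAt_comp21 hf; have h3 := hasDerivAt_comp22 hf
  have g1 := hasDerivAt_comp1 hg; have g2 := hasDerivAt_comp21 hg; have g3 := hasDerivAt_comp22 hg
  have key : HasDerivAt (fun s => c * (f s).1 * (g s).1 + (f s).2.1 * (g s).2.1 + (f s).2.2 * (g s).2.2)
      (((c * f'.1) * (g s).1 + (c * (f s).1) * g'.1) + (f'.2.1 * (g s).2.1 + (f s).2.1 * g'.2.1)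
        + (f'.2.2 * (g s).2.2 + (f s).2.2 * g'.2.2)) s :=
    (((h1.const_mul c).mul g1).add (h2.mul g2)).add (h3.mul g3)
  have heq : (fun s => ip c (f s) (g s)) = fun s => c * (f s).1 * (g s).1 + (f s).2.1 * (g s).2.1 + (f s).2.2 * (g s).2.2 := by
    funext s; simp [ip]
  rw [heq]
  convert key using 1
  simp [ip]; ring

lemma hasDerivAt_prod3 {f1 f2 f3 : ℝ → ℝ} {a1 a2 a3 : ℝ} {s : ℝ}
    (h1 : HasDerivAt f1 a1 s) (h2 : HasDerivAt f2 a2 s) (h3 : HasDerivAt f3 a3 s) :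
    HasDerivAt (fun s => ((f1 s, f2 s, f3 s) : ℝ × ℝ × ℝ)) (a1, a2, a3) s :=
  h1.prodMk (h2.prodMk h3)

lemma hasDerivAt_wedge {c : ℝ} {f g : ℝ → ℝ × ℝ × ℝ} {f' g' : ℝ × ℝ × ℝ} {s : ℝ}
    (hf : HasDerivAt f f' s) (hg : HasDerivAt g g' s) :
    HasDerivAt (fun s => wedge c (f s) (g s)) (wedge c f' (g s) + wedge c (f s) g') s := by
  have h1 := hasDerivAt_comp1 hf; have h2 := hasDerivAt_comp21 hf; have h3 := hasDerivAt_comp22 hf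
  have g1 := hasDerivAt_comp1 hg; have g2 := hasDerivAt_comp21 hg; have g3 := hasDerivAt_comp22 hg
  have c1 : HasDerivAt (fun s => c * ((f s).2.1 * (g s).2.2 - (f s).2.2 * (g s).2.1))
      (c * ((f'.2.1 * (g s).2.2 + (f s).2.1 * g'.2.2) - (f'.2.2 * (g s).2.1 + (f s).2.2 * g'.2.1))) s :=
    ((h2.mul g3).sub (h3.mul g2)).const_mul c
  have c2 : HasDerivAt (fun s => (f s).2.2 * (g s).1 - (f s).1 * (g s).2.2)
      ((f'.2.2 * (g s).1 + (f s).2.2 * g'.1) - (f'.1 * (g s).2.2 + (f s).1 * g'.2.2)) s :=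
    (h3.mul g1).sub (h1.mul g3)
  have c3 : HasDerivAt (fun s => (f s).1 * (g s).2.1 - (f s).2.1 * (g s).1)
      ((f'.1 * (g s).2.1 + (f s).1 * g'.2.1) - (f'.2.1 * (g s).1 + (f s).2.1 * g'.1)) s :=
    (h1.mul g2).sub (h2.mul g1)
  have key := hasDerivAt_prod3 c1 c2 c3
  have heq : (fun s => wedge c (f s) (g s)) = fun s => ((c * ((f s).2.1 * (g s).2.2 - (f s).2.2 * (g s).2.1), (f s).2.2 * (g s).1 - (f s).1 * (g s).2.2, (f s).1 * (g s).2.1 - (f s).2.1 * (g s).1) : ℝ × ℝ × ℝ) := by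
    funext s; simp [wedge]
  rw [heq]
  convert key using 1
  simp only [wedge, Prod.mk_add_mk, Prod.mk.injEq]
  refine ⟨by ring, by ring, by ring⟩

lemma contDiff_comp1 {f : ℝ → ℝ × ℝ × ℝ} (hf : ContDiff ℝ (⊤:ℕ∞) f) :
    ContDiff ℝ (⊤:ℕ∞) (fun s => (f s).1) := contDiff_fst.comp hf
lemma contDiff_comp21 {f : ℝ → ℝ × ℝ × ℝ} (hf : ContDiff ℝ (⊤:ℕ∞) f) :
    ContDiff ℝ (⊤:ℕ∞) (fun s => (f s).2.1) := contDiff_fst.comp (contDiff_snd.comp hf)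
lemma contDiff_comp22 {f : ℝ → ℝ × ℝ × ℝ} (hf : ContDiff ℝ (⊤:ℕ∞) f) :
    ContDiff ℝ (⊤:ℕ∞) (fun s => (f s).2.2) := contDiff_snd.comp (contDiff_snd.comp hf)

lemma contDiff_ip {c : ℝ} {f g : ℝ → ℝ × ℝ × ℝ} (hf : ContDiff ℝ (⊤:ℕ∞) f) (hg : ContDiff ℝ (⊤:ℕ∞) g) :
    ContDiff ℝ (⊤:ℕ∞) (fun s => ip c (f s) (g s)) := by
  simp only [ip]
  exact ((((contDiff_const.mul (contDiff_comp1 hf)).mul (contDiff_comp1 hg)).add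
    ((contDiff_comp21 hf).mul (contDiff_comp21 hg))).add
    ((contDiff_comp22 hf).mul (contDiff_comp22 hg)))

lemma contDiff_wedge {c : ℝ} {f g : ℝ → ℝ × ℝ × ℝ} (hf : ContDiff ℝ (⊤:ℕ∞) f) (hg : ContDiff ℝ (⊤:ℕ∞) g) :
    ContDiff ℝ (⊤:ℕ∞) (fun s => wedge c (f s) (g s)) := by
  simp only [wedge]
  refine ContDiff.prodMk ?_ (ContDiff.prodMk ?_ ?_)
  · exact contDiff_const.mul (((contDiff_comp21 hf).mul (contDiff_comp22 hg)).sub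
      ((contDiff_comp22 hf).mul (contDiff_comp21 hg)))
  · exact ((contDiff_comp22 hf).mul (contDiff_comp1 hg)).sub
      ((contDiff_comp1 hf).mul (contDiff_comp22 hg))
  · exact ((contDiff_comp1 hf).mul (contDiff_comp21 hg)).sub
      ((contDiff_comp21 hf).mul (contDiff_comp1 hg))

end Helpers

theorem evolutoid_degenerate_singularity
    (c : ℝ) (hc : c ∈ ({-1, 1} : Set ℝ))
    (γ : ℝ → ℝ × ℝ × ℝ) (hγ : ContDiff ℝ (⊤ : ℕ∞) γ)
    (hγM : ∀ s, ip c (γ s) (γ s) = c)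
    (hunit : ∀ s, ip c (deriv γ s) (deriv γ s) = 1)
    (t : ℝ → ℝ × ℝ × ℝ) (ht : t = deriv γ)
    (e : ℝ → ℝ × ℝ × ℝ) (he : ∀ s, e s = wedge c (γ s) (t s))
    (k : ℝ → ℝ) (hk : ∀ s, k s = ip c (deriv (deriv γ) s) (e s))
    (α : ℝ) (hα : α ∈ Set.Icc 0 (Real.pi / 2))
    (a b : ℝ) (ha : a = Real.cos α) (hb : b = Real.sin α)
    (v : ℝ → ℝ × ℝ × ℝ) (hv : ∀ s, v s = a • t s + b • e s)
    (hconv₁ : c = 1 → ∀ s, 0 < k s) (hconv₂ : c = -1 → ∀ s, 1 < k s)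
    (ρ : ℝ → ℝ) (hρ : ∀ s, ρ s = arctanc c (b / k s))
    (γα : ℝ → ℝ × ℝ × ℝ)
    (hγα : ∀ s, γα s = cosc c (ρ s) • γ s + sinc c (ρ s) • v s)
    (w : ℝ → ℝ × ℝ × ℝ)
    (hw : ∀ s, w s = (-(c * sinc c (ρ s))) • γ s + cosc c (ρ s) • v s)
    (s₀ : ℝ) (hsing : deriv ρ s₀ = -Real.cos α) :
    deriv (deriv γα) s₀ = deriv (deriv ρ) s₀ • w s₀ ∧
      (deriv (deriv ρ) s₀ = 0 →
        deriv (deriv γα) s₀ = 0 ∧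
        wedge c (deriv (deriv γα) s₀) (deriv (deriv (deriv γα)) s₀) = 0) := by
  have hone : ((⊤:ℕ∞) : WithTop ℕ∞) ≠ 0 := by simp
  -- basic facts
  have hc1 : c = -1 ∨ c = 1 := by simpa [Set.mem_insert_iff] using hc
  have hD : c * c = 1 := by rcases hc1 with h | h <;> rw [h] <;> norm_num
  have hab : a ^ 2 + b ^ 2 = 1 := by
    rw [ha, hb]; nlinarith [Real.sin_sq_add_cos_sq α]
  have hb0 : 0 ≤ b := by
    rw [hb]; exact Real.sin_nonneg_of_nonneg_of_le_pi hα.1 (le_trans hα.2 (by linarith [Real.pi_pos]))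
  have hb1 : b ≤ 1 := by rw [hb]; exact Real.sin_le_one α
  have hkpos : ∀ s, 0 < k s := by
    rcases hc1 with h | h
    · exact fun s => lt_trans one_pos (hconv₂ h s)
    · exact hconv₁ h
  have hkne : ∀ s, k s ≠ 0 := fun s => (hkpos s).ne'
  -- smoothness
  have hγ' : ContDiff ℝ (⊤:ℕ∞) γ := hγ.of_le (by simp)
  have hγd : Differentiable ℝ γ := hγ'.differentiable hone
  have htsm : ContDiff ℝ (⊤:ℕ∞) t := by
    rw [ht]; exact (contDiff_infty_iff_deriv.mp hγ').2
  have htd : Differentiable ℝ t := htsm.differentiable hone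
  have ht'sm : ContDiff ℝ (⊤:ℕ∞) (deriv t) := (contDiff_infty_iff_deriv.mp htsm).2
  have hefun : e = fun s => wedge c (γ s) (t s) := funext he
  have hesm : ContDiff ℝ (⊤:ℕ∞) e := by rw [hefun]; exact contDiff_wedge hγ' htsm
  have hed : Differentiable ℝ e := hesm.differentiable hone
  have hkfun : k = fun s => ip c (deriv t s) (e s) := by
    funext s; rw [hk s, ht]
  have hksm : ContDiff ℝ (⊤:ℕ∞) k := by rw [hkfun]; exact contDiff_ip ht'sm hesm
  -- derivatives of basic curves
  have hγt : ∀ s, HasDerivAt γ (t s) s := fun s => by rw [ht]; exact (hγd s).hasDerivAt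
  have htt : ∀ s, HasDerivAt t (deriv t s) s := fun s => (htd s).hasDerivAt
  have het : ∀ s, HasDerivAt e (deriv e s) s := fun s => (hed s).hasDerivAt
  -- orthogonality relations
  have hip_γt : ∀ s, ip c (γ s) (t s) = 0 := by
    intro s
    have h1 : HasDerivAt (fun s => ip c (γ s) (γ s)) (ip c (t s) (γ s) + ip c (γ s) (t s)) s :=
      hasDerivAt_ip (hγt s) (hγt s)
    have h2 : HasDerivAt (fun s => ip c (γ s) (γ s)) 0 s := by
      have heqc : (fun s => ip c (γ s) (γ s)) = fun _ => c := funext hγM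
      rw [heqc]; exact hasDerivAt_const s c
    have h3 := h1.unique h2
    have h4 := ip_symm c (t s) (γ s)
    linarith
  have hunit' : ∀ s, ip c (t s) (t s) = 1 := fun s => by rw [ht]; exact hunit s
  have hip_t't : ∀ s, ip c (deriv t s) (t s) = 0 := by
    intro s
    have h1 : HasDerivAt (fun s => ip c (t s) (t s)) (ip c (deriv t s) (t s) + ip c (t s) (deriv t s)) s :=
      hasDerivAt_ip (htt s) (htt s)
    have h2 : HasDerivAt (fun s => ip c (t s) (t s)) 0 s := by
      have heqc : (fun s => ip c (t s) (t s)) = fun _ => (1:ℝ) := funext hunit'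
      rw [heqc]; exact hasDerivAt_const s 1
    have h3 := h1.unique h2
    have h4 := ip_symm c (deriv t s) (t s)
    linarith
  have hip_t'γ : ∀ s, ip c (deriv t s) (γ s) = -1 := by
    intro s
    have h1 : HasDerivAt (fun s => ip c (γ s) (t s)) (ip c (t s) (t s) + ip c (γ s) (deriv t s)) s :=
      hasDerivAt_ip (hγt s) (htt s)
    have h2 : HasDerivAt (fun s => ip c (γ s) (t s)) 0 s := by
      have heqc : (fun s => ip c (γ s) (t s)) = fun _ => (0:ℝ) := funext hip_γt
      rw [heqc]; exact hasDerivAt_const s 0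
    have h3 := h1.unique h2
    have h4 := ip_symm c (deriv t s) (γ s)
    have h5 := hunit' s
    linarith
  have hke : ∀ s, ip c (deriv t s) (e s) = k s := by
    intro s; rw [hk s, ht]
  -- Frenet-type frame equations
  have hframeT : ∀ s, deriv t s = (-c) • γ s + k s • e s := by
    intro s
    have hexp := expand_lemma c (γ s) (t s) (deriv t s) hD (hγM s) (hunit' s) (hip_γt s)
    rw [← he s, hip_t'γ s, hip_t't s, hke s] at hexp
    rw [← hexp]
    match_scalars <;> ring
  have hframeE : ∀ s, deriv e s = (-(k s)) • t s := by
    intro s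
    have h1 : HasDerivAt e (wedge c (t s) (t s) + wedge c (γ s) (deriv t s)) s := by
      rw [hefun]; exact hasDerivAt_wedge (hγt s) (htt s)
    have h2 : deriv e s = wedge c (t s) (t s) + wedge c (γ s) (deriv t s) := h1.deriv
    rw [h2, wedge_self, hframeT s, wedge_bilin, wedge_self, he s,
      wedge_triple c (γ s) (t s) hD (hγM s) (hip_γt s)]
    match_scalars <;> ring
  -- smoothness of ρ and the key identity
  have hρsm : ContDiff ℝ (⊤:ℕ∞) ρ := by
    have hρfun : ρ = fun s => arctanc c (b / k s) := funext hρ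
    rcases hc1 with h | h
    · subst h
      have hlt : ∀ s, b / k s < 1 := fun s =>
        (div_lt_one (hkpos s)).mpr (lt_of_le_of_lt hb1 (hconv₂ rfl s))
      have hge : ∀ s, 0 ≤ b / k s := fun s => div_nonneg hb0 (hkpos s).le
      have h1 : ∀ s, (0:ℝ) < 1 + b / k s := fun s => by linarith [hge s]
      have h2 : ∀ s, (0:ℝ) < 1 - b / k s := fun s => by linarith [hlt s]
      have hq : ContDiff ℝ (⊤:ℕ∞) (fun s => b / k s) := contDiff_const.div hksm hkne
      have : ρ = fun s => Real.log ((1 + b / k s) / (1 - b / k s)) / 2 := by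
        rw [hρfun]; funext s; simp [arctanc, arctanh]
      rw [this]
      exact (((contDiff_const.add hq).div (contDiff_const.sub hq) (fun s => (h2 s).ne')).log
        (fun s => (div_pos (h1 s) (h2 s)).ne')).div_const 2
    · subst h
      have : ρ = fun s => Real.arctan (b / k s) := by
        rw [hρfun]; funext s; simp [arctanc, (by norm_num : (1:ℝ) ≠ -1)]
      rw [this]
      exact Real.contDiff_arctan.comp (contDiff_const.div hksm hkne)
  have hρd : ∀ s, HasDerivAt ρ (deriv ρ s) s := fun s =>
    ((hρsm.differentiable hone) s).hasDerivAt
  have hkey : ∀ s, k s * sinc c (ρ s) = b * cosc c (ρ s) := by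
    intro s
    rcases hc1 with h | h
    · subst h
      have hlt : b / k s < 1 := (div_lt_one (hkpos s)).mpr (lt_of_le_of_lt hb1 (hconv₂ rfl s))
      have hge : 0 ≤ b / k s := div_nonneg hb0 (hkpos s).le
      have h1 : (0:ℝ) < 1 + b / k s := by linarith
      have h2 : (0:ℝ) < 1 - b / k s := by linarith
      have hbk : b < k s := lt_of_le_of_lt hb1 (hconv₂ rfl s)
      have hρs : ρ s = Real.log ((1 + b / k s) / (1 - b / k s)) / 2 := by
        rw [hρ s]; simp [arctanc, arctanh]
      have hexp2 : Real.exp (ρ s) * Real.exp (ρ s) = (k s + b) / (k s - b) := by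
        rw [← Real.exp_add, hρs]
        have : Real.log ((1 + b / k s) / (1 - b / k s)) / 2 +
            Real.log ((1 + b / k s) / (1 - b / k s)) / 2 =
            Real.log ((1 + b / k s) / (1 - b / k s)) := by ring
        rw [this, Real.exp_log (div_pos h1 h2)]
        have hks := hkne s
        have hkb' : k s - b ≠ 0 := by linarith
        rw [div_eq_div_iff h2.ne' hkb']
        field_simp
      have hE : (0:ℝ) < Real.exp (ρ s) := Real.exp_pos _
      have hkb : k s - b ≠ 0 := by linarith
      simp only [_root_.sinc, cosc, if_pos rfl, ↓reduceIte]
      rw [Real.sinh_eq, Real.cosh_eq, Real.exp_neg]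
      have hEE : Real.exp (ρ s) * Real.exp (ρ s) * (k s - b) = k s + b := by
        rw [hexp2]; field_simp
      have hEne : Real.exp (ρ s) ≠ 0 := hE.ne'
      field_simp
      nlinarith [hEE]
    · subst h
      simp only [hρ s, _root_.sinc, cosc, arctanc, if_neg (by norm_num : (1:ℝ) ≠ -1)]
      rw [Real.sin_arctan, Real.cos_arctan]
      have hS : Real.sqrt (1 + (b / k s) ^ 2) ≠ 0 := by
        positivity
      field_simp
      exact mul_div_cancel_left₀ b (hkne s)
  -- derivative facts for sinc/cosc composed with ρ
  have hsincd : ∀ s, HasDerivAt (fun s => sinc c (ρ s)) (cosc c (ρ s) * deriv ρ s) s := by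
    intro s
    rcases hc1 with h | h <;> subst h
    · have hfn : (fun s => sinc (-1) (ρ s)) = fun s => Real.sinh (ρ s) := by
        funext u; simp [_root_.sinc]
      have hval : cosc (-1) (ρ s) * deriv ρ s = Real.cosh (ρ s) * deriv ρ s := by
        simp [cosc]
      rw [hfn, hval]
      exact (Real.hasDerivAt_sinh (ρ s)).comp s (hρd s)
    · have hfn : (fun s => sinc 1 (ρ s)) = fun s => Real.sin (ρ s) := by
        funext u; simp only [_root_.sinc]; norm_num
      have hval : cosc 1 (ρ s) * deriv ρ s = Real.cos (ρ s) * deriv ρ s := by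
        simp only [cosc]; norm_num
      rw [hfn, hval]
      exact (Real.hasDerivAt_sin (ρ s)).comp s (hρd s)
  have hcoscd : ∀ s, HasDerivAt (fun s => cosc c (ρ s)) (-(c * sinc c (ρ s)) * deriv ρ s) s := by
    intro s
    rcases hc1 with h | h <;> subst h
    · have hfn : (fun s => cosc (-1) (ρ s)) = fun s => Real.cosh (ρ s) := by
        funext u; simp [cosc]
      have hval : -((-1) * sinc (-1) (ρ s)) * deriv ρ s = Real.sinh (ρ s) * deriv ρ s := by
        simp [_root_.sinc]
      rw [hfn, hval]
      exact (Real.hasDerivAt_cosh (ρ s)).comp s (hρd s)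
    · have hfn : (fun s => cosc 1 (ρ s)) = fun s => Real.cos (ρ s) := by
        funext u; simp only [cosc]; norm_num
      have hval : -(1 * sinc 1 (ρ s)) * deriv ρ s = -Real.sin (ρ s) * deriv ρ s := by
        simp only [_root_.sinc]; norm_num
      rw [hfn, hval]
      exact (Real.hasDerivAt_cos (ρ s)).comp s (hρd s)
  -- the main first-derivative identity
  have hvd : ∀ s, HasDerivAt v (a • deriv t s + b • deriv e s) s := by
    intro s
    have hvfun : v = fun s => a • t s + b • e s := funext hv
    rw [hvfun]
    exact ((htt s).const_smul a).add ((het s).const_smul b)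
  have hmain : ∀ s, HasDerivAt γα ((deriv ρ s + a) • w s) s := by
    intro s
    have hγαfun : γα = fun s => cosc c (ρ s) • γ s + sinc c (ρ s) • v s := funext hγα
    have hder : HasDerivAt γα
        ((cosc c (ρ s) • t s + (-(c * sinc c (ρ s)) * deriv ρ s) • γ s) +
         (sinc c (ρ s) • (a • deriv t s + b • deriv e s) + (cosc c (ρ s) * deriv ρ s) • v s)) s := by
      rw [hγαfun]
      exact ((hcoscd s).smul (hγt s)).add ((hsincd s).smul (hvd s))
    convert hder using 1
    rw [hw s, hv s, hframeT s, hframeE s]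
    have hk1 := hkey s
    match_scalars
    · ring
    · linear_combination b * hk1 + cosc c (ρ s) * hab
    · linear_combination (-a) * hk1
  -- first derivative as a function
  have hderiv1 : deriv γα = fun s => (deriv ρ s + a) • w s := funext fun s => (hmain s).deriv
  -- differentiability of w
  have hwd : HasDerivAt w
      ((-(c * sinc c (ρ s₀))) • t s₀ + (-(c * (cosc c (ρ s₀) * deriv ρ s₀))) • γ s₀ +
        (cosc c (ρ s₀) • (a • deriv t s₀ + b • deriv e s₀) +
          (-(c * sinc c (ρ s₀)) * deriv ρ s₀) • v s₀)) s₀ := by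
    have hwfun : w = fun s => (-(c * sinc c (ρ s))) • γ s + cosc c (ρ s) • v s := funext hw
    rw [hwfun]
    have hco : HasDerivAt (fun s => -(c * sinc c (ρ s))) (-(c * (cosc c (ρ s₀) * deriv ρ s₀))) s₀ :=
      (((hsincd s₀).const_mul c).neg)
    exact (hco.smul (hγt s₀)).add ((hcoscd s₀).smul (hvd s₀))
  -- second derivative of ρ
  have hρ'd : HasDerivAt (deriv ρ) (deriv (deriv ρ) s₀) s₀ :=
    (((contDiff_infty_iff_deriv.mp hρsm).2.differentiable hone) s₀).hasDerivAt
  -- second derivative of γα at s₀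
  have hzero : deriv ρ s₀ + a = 0 := by rw [hsing, ha]; ring
  have h2nd : deriv (deriv γα) s₀ = deriv (deriv ρ) s₀ • w s₀ := by
    have hd : HasDerivAt (fun s => (deriv ρ s + a) • w s)
        ((deriv ρ s₀ + a) • _ + deriv (deriv ρ) s₀ • w s₀) s₀ :=
      (hρ'd.add_const a).smul hwd
    rw [hzero, zero_smul, zero_add] at hd
    rw [hderiv1]
    exact hd.deriv
  refine ⟨h2nd, fun h0 => ?_⟩
  have hz : deriv (deriv γα) s₀ = 0 := by rw [h2nd, h0, zero_smul]
  exact ⟨hz, by rw [hz]; exact wedge_zero_left c _⟩
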